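/- arXiv:1912.11134 — 2 statements merged into one kernel-verified Lean document; each statement's English description precedes it below -/
import Mathlib

section
/- Let θ be an irrational real number, let x : ℤ → ℝ be given by x_n = 2·cos(2πnθ) + 3, and let D := diag(n ↦ exp(2πinθ)) be the diagonal unitary with D e_n = e^{2πinθ} e_n. Then C*({T_x}) = C*({T, D}), i.e. the closed unital star-subalgebra of the bounded operators on ℓ²(ℤ) generated by the weighted shift T_x equals the closed unital star-subalgebra generated by the bilateral shift T together with D. -/
open Real Complex

/-!
Write `Tx = T * M` with `M = diag x`. Since `x n = |1 + e^{2πinθ}|² + 1`, we have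
`M = D + D⋆ + 3 = 1 + (1 + D)⋆ (1 + D) ≥ 1`, so `M` is the positive square root of `Tx⋆ Tx`
and is invertible; hence `M` and `T = Tx M⁻¹` lie in `C*(Tx)`. Conjugating `D + D⋆ = M - 3`
by `T` multiplies `D` and `D⋆` by the conjugate scalars `e^{2πiθ}` and `e^{-2πiθ}`, which are
distinct because `θ` is irrational, so `D` itself is a combination of `D + D⋆` and its conjugate.
Only the relations `T⋆T = D⋆D = 1` and `T⋆DT = e^{2πiθ}D` enter, so the argument runs in any
unital C⋆-algebra.
-/

/-- The Hilbert space ℓ²(ℤ) of square-summable complex sequences. -/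
noncomputable abbrev H : Type := lp (fun _ : ℤ => ℂ) 2

/-- `C*(S)`: the smallest closed unital star-subalgebra of the bounded operators on ℓ²(ℤ)
containing `S`. -/
noncomputable def Cstar (S : Set (H →L[ℂ] H)) : StarSubalgebra ℂ (H →L[ℂ] H) :=
  (StarAlgebra.adjoin ℂ S).topologicalClosure

lemma StarSubalgebra.mem_of_add_star_mem_of_star_mul_mul_eq_smul {A : Type*} [Ring A]
    [StarRing A] [Algebra ℂ A] [StarModule ℂ A] (S : StarSubalgebra ℂ A) {u v : A} {μ : ℂ}
    (hu : u ∈ S) (hv : v + star v ∈ S) (huv : star u * v * u = μ • v) (hμ : star μ ≠ μ) :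
    v ∈ S := by
  have huv' : star u * star v * u = star μ • star v := by
    simpa [mul_assoc] using congrArg star huv
  have : (μ - star μ)⁻¹ • (star u * (v + star v) * u - star μ • (v + star v)) = v := by
    rw [mul_add, add_mul, huv, huv', smul_add, add_sub_add_right_eq_sub, ← sub_smul,
      smul_smul, inv_mul_cancel₀ (sub_ne_zero.2 (Ne.symm hμ)), one_smul]
  exact this ▸ S.smul_mem (sub_mem (mul_mem (mul_mem (star_mem hu) hv) hu) (S.smul_mem hv _)) _

section CStarAlgebra

variable {A : Type*} [CStarAlgebra A]

lemma StarSubalgebra.ringInverse_mem (S : StarSubalgebra ℂ A) [IsClosed (S : Set A)] {a : A}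
    (ha : a ∈ S) : Ring.inverse a ∈ S := by
  by_cases hunit : IsUnit a
  · set b : S := Ring.inverse ⟨a, ha⟩
    have hab : a * b = 1 :=
      congrArg Subtype.val (Ring.mul_inverse_cancel _ ((S.coe_isUnit (a := ⟨a, ha⟩)).1 hunit))
    have : Ring.inverse a = b := by
      rw [← Ring.inverse_mul_cancel_left a b hunit, hab, mul_one]
    exact this ▸ b.2
  · rw [Ring.inverse_non_unit a hunit]
    exact zero_mem S

variable [PartialOrder A] [StarOrderedRing A]

lemma StarSubalgebra.sqrt_mem (S : StarSubalgebra ℂ A) [IsClosed (S : Set A)] {a : A}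
    (ha : a ∈ S) : CFC.sqrt a ∈ S := by
  by_cases h : 0 ≤ a
  · rw [CFC.sqrt_eq_real_sqrt a h, cfcₙ_eq_cfc]
    exact cfc_mem (𝕜' := ℂ) _ ha
  · rw [CFC.sqrt_of_not_nonneg h]
    exact zero_mem S

lemma one_le_add_star_add_three {v : A} (hv : star v * v = 1) : 1 ≤ v + star v + 3 := by
  have : v + star v + 3 = 1 + star (1 + v) * (1 + v) := by
    rw [star_add, star_one, add_mul, one_mul, mul_add, mul_one, hv,
      show (3 : A) = 1 + 1 + 1 by norm_num]
    abel
  rw [this]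
  exact le_add_of_nonneg_right (star_mul_self_nonneg _)

theorem topologicalClosure_adjoin_mul_add_star_add_three {u v : A} {μ : ℂ}
    (hu : star u * u = 1) (hv : star v * v = 1) (huv : star u * v * u = μ • v)
    (hμ : star μ ≠ μ) :
    (StarAlgebra.adjoin ℂ {u * (v + star v + 3)}).topologicalClosure =
      (StarAlgebra.adjoin ℂ {u, v}).topologicalClosure := by
  set m := v + star v + 3
  have hS := (StarAlgebra.adjoin ℂ {u * m}).isClosed_topologicalClosure
  have hwS := (StarAlgebra.adjoin ℂ {u * m}).le_topologicalClosure
    (StarAlgebra.self_mem_adjoin_singleton ℂ (u * m))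
  set S := (StarAlgebra.adjoin ℂ {u * m}).topologicalClosure
  have hm_one : 1 ≤ m := one_le_add_star_add_three hv
  have hm_star : star m = m := by
    simp only [m, star_add, star_star, star_ofNat]
    abel
  have hmS : m ∈ S := by
    have : CFC.sqrt (star (u * m) * (u * m)) = m := by
      rw [star_mul, hm_star, mul_assoc, ← mul_assoc (star u), hu, one_mul,
        CFC.sqrt_mul_self m (zero_le_one.trans hm_one)]
    exact this ▸ S.sqrt_mem (mul_mem (star_mem hwS) hwS)
  have huS : u ∈ S := by
    have : u * m * Ring.inverse m = u :=
      Ring.mul_inverse_cancel_right _ _ (CStarAlgebra.isUnit_of_le 1 hm_one)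
    exact this ▸ mul_mem hwS (S.ringInverse_mem hmS)
  have hvS : v ∈ S := S.mem_of_add_star_mem_of_star_mul_mul_eq_smul huS
    (by simpa [m] using sub_mem hmS (ofNat_mem S 3)) huv hμ
  have hvA : v ∈ StarAlgebra.adjoin ℂ {u, v} := StarAlgebra.subset_adjoin ℂ _ (by simp)
  have hwA : u * m ∈ StarAlgebra.adjoin ℂ {u, v} :=
    mul_mem (StarAlgebra.subset_adjoin ℂ _ (by simp))
      (add_mem (add_mem hvA (star_mem hvA)) (ofNat_mem _ 3))
  refine le_antisymm ?_ ?_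
  · exact StarSubalgebra.topologicalClosure_mono
      (StarAlgebra.adjoin_le (Set.singleton_subset_iff.2 hwA))
  · refine StarSubalgebra.topologicalClosure_minimal (StarAlgebra.adjoin_le ?_) hS
    rintro _ (rfl | rfl)
    · exact huS
    · exact hvS

end CStarAlgebra

lemma clm_ext_coord {G G' : H →L[ℂ] H} (h : ∀ (f : H) (n : ℤ), G f n = G' f n) : G = G' :=
  ContinuousLinearMap.ext fun f => lp.ext (funext (h f))

lemma star_apply_of_apply_eq_mul_sub {G : H →L[ℂ] H} {c : ℤ → ℂ} {k : ℤ}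
    (hG : ∀ (f : H) (n : ℤ), G f n = c n * f (n - k)) (f : H) (n : ℤ) :
    (star G) f n = star (c (n + k)) * f (n + k) := by
  have hsingle : G (lp.single 2 n 1) = lp.single 2 (n + k) (c (n + k)) := by
    ext m
    rcases eq_or_ne m (n + k) with rfl | hm
    · simp [hG]
    · simp [hG, sub_eq_iff_eq_add, hm]
  calc (star G) f n = inner ℂ (lp.single 2 n (1 : ℂ)) (star G f) := by
        rw [lp.inner_single_left]; simp
    _ = inner ℂ (G (lp.single 2 n 1)) f := by
        rw [ContinuousLinearMap.star_eq_adjoint, ContinuousLinearMap.adjoint_inner_right]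
    _ = star (c (n + k)) * f (n + k) := by
        rw [hsingle, lp.inner_single_left]; simp [mul_comm]

lemma star_mul_self_eq_one_of_apply_eq_mul_sub {G : H →L[ℂ] H} {c : ℤ → ℂ} {k : ℤ}
    (hG : ∀ (f : H) (n : ℤ), G f n = c n * f (n - k)) (hc : ∀ n, star (c n) * c n = 1) :
    star G * G = 1 :=
  clm_ext_coord fun f n => by
    rw [mul_apply_eq_comp, star_apply_of_apply_eq_mul_sub hG, hG, ← mul_assoc, hc,
      add_sub_cancel_right, one_mul, one_apply_eq_self]

lemma star_exp_mul_I_mul_self (t : ℝ) : star (exp (t * I)) * exp (t * I) = 1 := by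
  rw [Complex.star_def, ← Complex.exp_conj, ← Complex.exp_add]
  simp

lemma exp_mul_I_add_star (t : ℝ) : exp (t * I) + star (exp (t * I)) = 2 * Real.cos t := by
  simp [Complex.add_conj, Complex.exp_ofReal_mul_I_re]

lemma Irrational.star_exp_two_pi_mul_I_ne {θ : ℝ} (hθ : Irrational θ) :
    star (exp ((2 * π * θ : ℝ) * I)) ≠ exp ((2 * π * θ : ℝ) * I) := by
  rw [Ne, Complex.star_def, Complex.conj_eq_iff_im, Complex.exp_ofReal_mul_I_im,
    Real.sin_eq_zero_iff]
  rintro ⟨m, hm⟩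
  exact hθ ⟨m / 2, by push_cast; nlinarith [Real.pi_pos]⟩

/-- For irrational `θ` and weights `x n = 2 cos(2πnθ) + 3`, the C*-algebra
generated by the weighted shift `T_x` equals the C*-algebra generated by the bilateral
shift `T` together with the diagonal unitary `D = diag (n ↦ exp (2πinθ))`. -/
theorem cstar_weighted_shift_eq_cstar_irrational_rotation
    (θ : ℝ) (hθ : Irrational θ)
    (x : ℤ → ℝ) (hx : ∀ n : ℤ, x n = 2 * Real.cos (2 * Real.pi * n * θ) + 3)
    (Tx T D : H →L[ℂ] H)
    (hTx : ∀ (f : H) (n : ℤ), Tx f n = (x (n - 1) : ℂ) * f (n - 1))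
    (hT : ∀ (f : H) (n : ℤ), T f n = f (n - 1))
    (hD : ∀ (f : H) (n : ℤ),
      D f n = Complex.exp (2 * Real.pi * Complex.I * n * θ) * f n) :
    Cstar {Tx} = Cstar {T, D} := by
  have hT' : ∀ (f : H) (n : ℤ), T f n = 1 * f (n - 1) := by simp [hT]
  have hD' : ∀ (f : H) (n : ℤ), D f n = exp ((2 * π * n * θ : ℝ) * I) * f (n - 0) :=
    fun f n => by rw [hD, sub_zero]; push_cast; ring_nf
  have hTx_eq : Tx = T * (D + star D + 3) := clm_ext_coord fun f n => by
    have hsD := star_apply_of_apply_eq_mul_sub hD' f (n - 1)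
    have h3 : (3 : H →L[ℂ] H) f (n - 1) = 3 * f (n - 1) := by simp
    rw [add_zero] at hsD
    simp only [mul_apply_eq_comp, hT, add_apply, lp.coeFn_add, Pi.add_apply, hD', sub_zero, hsD,
      h3, hTx, hx]
    rw [← add_mul, ← add_mul, exp_mul_I_add_star]
    push_cast
    ring
  have hrot : star T * D * T = exp ((2 * π * θ : ℝ) * I) • D := clm_ext_coord fun f n => by
    have hexp : ((2 * π * (n + 1 : ℤ) * θ : ℝ) : ℂ) * I
        = (2 * π * θ : ℝ) * I + (2 * π * n * θ : ℝ) * I := by push_cast; ring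
    simp only [mul_apply_eq_comp, star_apply_of_apply_eq_mul_sub hT', hD', smul_apply,
      lp.coeFn_smul, Pi.smul_apply, smul_eq_mul, hexp, Complex.exp_add]
    simp [hT, mul_assoc]
  rw [Cstar, Cstar, hTx_eq]
  exact topologicalClosure_adjoin_mul_add_star_add_three
    (star_mul_self_eq_one_of_apply_eq_mul_sub hT' fun _ => by simp)
    (star_mul_self_eq_one_of_apply_eq_mul_sub hD' fun _ => star_exp_mul_I_mul_self _)
    hrot hθ.star_exp_two_pi_mul_I_ne
end

section
/- Let K be a Cantor space and let α : K ≃ₜ K be a minimal homeomorphism. Then for every n ∈ ℕ and every x ∈ K there exists a clopen set U ⊆ K with x ∈ U such that the sets U, α(U), α²(U), …, αⁿ(U) are pairwise disjoint. -/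
/-!
A minimal homeomorphism of an infinite T₁ space has no periodic points, since a periodic orbit is
finite, hence closed, and cannot be dense. So for `0 < k ≤ n` the point `αᵏ x` differs from `x`,
and a clopen set `W ∋ x` missing `αᵏ x` yields the clopen neighbourhood `W ∩ α⁻ᵏ(Wᶜ)` of `x`
that is disjoint from its `αᵏ`-image. The intersection `U` of these neighbourhoods has
`αᵏ(U) ∩ U = ∅` for `0 < k ≤ n`, and applying `αⁱ` gives `αⁱ⁺ᵏ(U) ∩ αⁱ(U) = ∅`.
-/

open Set

namespace Equiv.Perm

variable {X : Type*}

theorem zpow_apply_mem_image_Ico_of_pow_apply_eq_self {e : Perm X} {y : X} {k : ℕ} (hk : 0 < k)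
    (hy : (e ^ k) y = y) (m : ℤ) :
    (e ^ m) y ∈ (fun r : ℤ => (e ^ r) y) '' Ico 0 (k : ℤ) := by
  have hk' : (0 : ℤ) < k := by exact_mod_cast hk
  refine ⟨m % k, ⟨Int.emod_nonneg m hk'.ne', Int.emod_lt_of_pos m hk'⟩, ?_⟩
  have hfix : ((e ^ k) ^ (m / k)) y = y := zpow_apply_eq_self_of_apply_eq_self hy _
  calc (e ^ (m % k)) y = (e ^ (m % k)) (((e ^ k) ^ (m / k)) y) := by rw [hfix]
    _ = (e ^ (m % k + k * (m / k))) y := by rw [zpow_add, zpow_mul, zpow_natCast, mul_apply]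
    _ = (e ^ m) y := by rw [Int.emod_add_mul_ediv]

theorem disjoint_pow_image_of_disjoint_pow_image_self {e : Perm X} {U : Set X}
    {n : ℕ} (h : ∀ k, 0 < k → k ≤ n → _root_.Disjoint ((e ^ k) '' U) U) {i j : ℕ}
    (hi : i ≤ n) (hj : j ≤ n) (hij : i ≠ j) : _root_.Disjoint ((e ^ i) '' U) ((e ^ j) '' U) := by
  wlog hlt : i < j generalizing i j
  · exact (this hj hi hij.symm (hij.lt_or_gt.resolve_left hlt)).symm
  obtain ⟨k, hk, rfl⟩ : ∃ k, 0 < k ∧ j = i + k := ⟨j - i, by omega, by omega⟩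
  rw [pow_add, coe_mul, image_comp, _root_.disjoint_comm, disjoint_image_iff (e ^ i).injective]
  exact h k hk (by omega)

variable [TopologicalSpace X] [T1Space X] [Infinite X]

theorem pow_apply_ne_self_of_dense_orbit {e : Perm X} {y : X}
    (hdense : Dense (range fun n : ℤ => (e ^ n) y)) {k : ℕ} (hk : 0 < k) : (e ^ k) y ≠ y := by
  intro hy
  have hfin : (range fun n : ℤ => (e ^ n) y).Finite :=
    ((finite_Ico _ _).image _).subset <| range_subset_iff.mpr <|
      zpow_apply_mem_image_Ico_of_pow_apply_eq_self hk hy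
  have huniv : (range fun n : ℤ => (e ^ n) y) = univ := hfin.isClosed.closure_eq ▸ hdense.closure_eq
  exact infinite_univ (huniv ▸ hfin)

end Equiv.Perm

theorem infinite_of_perfect_univ {X : Type*} [TopologicalSpace X] [T1Space X] [Nonempty X]
    (hperf : Perfect (univ : Set X)) : Infinite X := by
  have : PerfectSpace X := ⟨hperf.acc⟩
  obtain ⟨x⟩ := ‹Nonempty X›
  exact infinite_univ_iff.mp (infinite_of_mem_nhds x Filter.univ_mem)

theorem exists_isClopen_mem_disjoint_image_self {X : Type*} [TopologicalSpace X]
    [TotallySeparatedSpace X] {f : X → X} (hf : Continuous f) {x : X}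
    (hx : f x ≠ x) : ∃ U : Set X, IsClopen U ∧ x ∈ U ∧ Disjoint (f '' U) U := by
  obtain ⟨W, hW, hxW, hfxW⟩ := exists_isClopen_of_totally_separated hx.symm
  refine ⟨W ∩ f ⁻¹' Wᶜ, hW.inter (hW.compl.preimage hf), ⟨hxW, hfxW⟩, ?_⟩
  rw [image_inter_preimage]
  exact disjoint_compl_left.mono inter_subset_right inter_subset_left

theorem exists_isClopen_mem_pairwise_disjoint_pow_image {X : Type*} [TopologicalSpace X]
    [TotallySeparatedSpace X] {e : Equiv.Perm X} (he : Continuous e) {x : X} {n : ℕ}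
    (hx : ∀ k, 0 < k → k ≤ n → (e ^ k) x ≠ x) :
    ∃ U : Set X, IsClopen U ∧ x ∈ U ∧
      ∀ i j : ℕ, i ≤ n → j ≤ n → i ≠ j → Disjoint ((e ^ i) '' U) ((e ^ j) '' U) := by
  have hV : ∀ k, ∃ V : Set X, IsClopen V ∧ x ∈ V ∧
      (0 < k → k ≤ n → Disjoint ((e ^ k) '' V) V) := by
    intro k
    by_cases hk : 0 < k ∧ k ≤ n
    · obtain ⟨V, hV, hxV, hdisj⟩ := exists_isClopen_mem_disjoint_image_self
        (by simpa only [Equiv.Perm.coe_pow] using he.iterate k) (hx k hk.1 hk.2)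
      exact ⟨V, hV, hxV, fun _ _ => hdisj⟩
    · exact ⟨univ, isClopen_univ, mem_univ x, fun h₁ h₂ => absurd ⟨h₁, h₂⟩ hk⟩
  choose V hVclopen hxV hVdisj using hV
  refine ⟨⋂ k ∈ Finset.range (n + 1), V k, isClopen_biInter_finset fun k _ => hVclopen k,
    mem_iInter₂.mpr fun k _ => hxV k, fun i j hi hj hij =>
      Equiv.Perm.disjoint_pow_image_of_disjoint_pow_image_self (fun k hk hkn => ?_) hi hj hij⟩
  have hsub : (⋂ k ∈ Finset.range (n + 1), V k) ⊆ V k :=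
    biInter_subset_of_mem (Finset.mem_range.mpr (Nat.lt_succ_of_le hkn))
  exact (hVdisj k hk hkn).mono (image_mono hsub) hsub

theorem exists_clopen_with_pairwise_disjoint_iterates_general
    {K : Type*} [TopologicalSpace K] [CompactSpace K] [TopologicalSpace.MetrizableSpace K]
    [TotallyDisconnectedSpace K]
    (hperf : Perfect (Set.univ : Set K))
    (α : K ≃ₜ K)
    (hmin : ∀ x : K, Dense (Set.range fun n : ℤ => (α.toEquiv ^ n) x))
    (n : ℕ) (x : K) :
    ∃ U : Set K, IsClopen U ∧ x ∈ U ∧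
      ∀ i j : ℕ, i ≤ n → j ≤ n → i ≠ j →
        Disjoint ((α.toEquiv ^ i) '' U) ((α.toEquiv ^ j) '' U) := by
  have : TotallySeparatedSpace K := loc_compact_t2_tot_disc_iff_tot_sep.mp inferInstance
  have : Nonempty K := ⟨x⟩
  have : Infinite K := infinite_of_perfect_univ hperf
  exact exists_isClopen_mem_pairwise_disjoint_pow_image α.continuous
    fun k hk _ => Equiv.Perm.pow_apply_ne_self_of_dense_orbit (hmin x) hk

/-- Let `K` be a Cantor space and `α : K ≃ₜ K` a minimal homeomorphism. Then for
every `n ∈ ℕ` and every `x ∈ K` there is a clopen set `U ∋ x` such that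
`U, α(U), …, αⁿ(U)` are pairwise disjoint. -/
theorem exists_clopen_with_pairwise_disjoint_iterates
    {K : Type*} [TopologicalSpace K] [CompactSpace K] [TopologicalSpace.MetrizableSpace K]
    [TotallyDisconnectedSpace K] [Nonempty K]
    (hperf : Perfect (Set.univ : Set K))
    (α : K ≃ₜ K)
    (hmin : ∀ x : K, Dense (Set.range fun n : ℤ => (α.toEquiv ^ n) x))
    (n : ℕ) (x : K) :
    ∃ U : Set K, IsClopen U ∧ x ∈ U ∧
      ∀ i j : ℕ, i ≤ n → j ≤ n → i ≠ j →
        Disjoint ((α.toEquiv ^ i) '' U) ((α.toEquiv ^ j) '' U) :=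
  exists_clopen_with_pairwise_disjoint_iterates_general hperf α hmin n x
end
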